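/- Let X̄ be a completion of a weakly distinguishing chronological set (X, ≪), viewed as the chronological set (X̄, ≪̄). If (P, F), with P a past set and F a future set of X, is an endpoint of a chain δ = (x_i) in X, then the pair (j(P), j(F)), where j(P) = I⁻[i[P]] and j(F) = I⁺[i[F]] are computed in X̄, is an endpoint (with respect to the chronological set (X̄, ≪̄)) of the chain (i(x_i)) in X̄. -/
import Mathlib


namespace CausalBoundary

variable {X : Type*}

/-- The past of a set of points: `I⁻[S]`. -/
def pastOf (r : X → X → Prop) (S : Set X) : Set X := {x | ∃ s ∈ S, r x s}

/-- The future of a set of points: `I⁺[S]`. -/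
def futureOf (r : X → X → Prop) (S : Set X) : Set X := {x | ∃ s ∈ S, r s x}

/-- The past of a point: `I⁻(x)`. -/
def pastPt (r : X → X → Prop) (x : X) : Set X := {y | r y x}

/-- The future of a point: `I⁺(x)`. -/
def futPt (r : X → X → Prop) (x : X) : Set X := {y | r x y}

/-- A past set: `P = I⁻[P]`. -/
def IsPastSet (r : X → X → Prop) (P : Set X) : Prop := P = pastOf r P

/-- A future set: `F = I⁺[F]`. -/
def IsFutureSet (r : X → X → Prop) (F : Set X) : Prop := F = futureOf r F

/-- An indecomposable past set (IP): a nonempty past set which is not the union of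
two proper subsets which are both past sets. -/
def IsIP (r : X → X → Prop) (P : Set X) : Prop :=
  IsPastSet r P ∧ P.Nonempty ∧
    ¬ ∃ P₁ P₂ : Set X, IsPastSet r P₁ ∧ IsPastSet r P₂ ∧ P₁ ⊂ P ∧ P₂ ⊂ P ∧ P = P₁ ∪ P₂

/-- An indecomposable future set (IF). -/
def IsIF (r : X → X → Prop) (F : Set X) : Prop :=
  IsFutureSet r F ∧ F.Nonempty ∧
    ¬ ∃ F₁ F₂ : Set X, IsFutureSet r F₁ ∧ IsFutureSet r F₂ ∧ F₁ ⊂ F ∧ F₂ ⊂ F ∧ F = F₁ ∪ F₂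

/-- `dec(P)`: the set of all maximal IPs (under inclusion) contained in `P`. -/
def decP (r : X → X → Prop) (P : Set X) : Set (Set X) :=
  {Q | IsIP r Q ∧ Q ⊆ P ∧ ∀ Q' : Set X, IsIP r Q' → Q' ⊆ P → Q ⊆ Q' → Q = Q'}

/-- `dec(F)` for future sets: the set of all maximal IFs contained in `F`. -/
def decF (r : X → X → Prop) (F : Set X) : Set (Set X) :=
  {Q | IsIF r Q ∧ Q ⊆ F ∧ ∀ Q' : Set X, IsIF r Q' → Q' ⊆ F → Q ⊆ Q' → Q = Q'}

/-- Inferior limit of a sequence of sets: `LI(Aₙ) = ∪ₙ ∩_{k ≥ n} A_k`. -/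
def seqLI (A : ℕ → Set X) : Set X := ⋃ n, ⋂ k, ⋂ (_ : n ≤ k), A k

/-- Superior limit of a sequence of sets: `LS(Aₙ) = ∩ₙ ∪_{k ≥ n} A_k`. -/
def seqLS (A : ℕ → Set X) : Set X := ⋂ n, ⋃ k, ⋃ (_ : n ≤ k), A k

/-- The limit operator `L̂`: `P ∈ L̂(σ)` iff `P` is an IP with `P ⊆ LI(I⁻(σₙ))` and
`P` is a maximal IP within `LS(I⁻(σₙ))`. -/
def Lhat (r : X → X → Prop) (σ : ℕ → X) : Set (Set X) :=
  {P | IsIP r P ∧ P ⊆ seqLI (fun n => pastPt r (σ n)) ∧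
    P ⊆ seqLS (fun n => pastPt r (σ n)) ∧
    ∀ P' : Set X, IsIP r P' → P' ⊆ seqLS (fun n => pastPt r (σ n)) → P ⊆ P' → P = P'}

/-- The limit operator `Ľ`, dual to `L̂`. -/
def Lcheck (r : X → X → Prop) (σ : ℕ → X) : Set (Set X) :=
  {F | IsIF r F ∧ F ⊆ seqLI (fun n => futPt r (σ n)) ∧
    F ⊆ seqLS (fun n => futPt r (σ n)) ∧
    ∀ F' : Set X, IsIF r F' → F' ⊆ seqLS (fun n => futPt r (σ n)) → F ⊆ F' → F = F'}

/-- The limit operator `L`: `x ∈ L(σ)` iff `dec(I⁻(x)) ⊆ L̂(σ)` and `dec(I⁺(x)) ⊆ Ľ(σ)`. -/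
def limitOp (r : X → X → Prop) (σ : ℕ → X) : Set X :=
  {x | decP r (pastPt r x) ⊆ Lhat r σ ∧ decF r (futPt r x) ⊆ Lcheck r σ}

/-- A future chain: a sequence with `xₙ ≪ xₙ₊₁`. -/
def IsFutureChain (r : X → X → Prop) (c : ℕ → X) : Prop := ∀ n, r (c n) (c (n + 1))

/-- A past chain: a sequence with `xₙ₊₁ ≪ xₙ`. -/
def IsPastChain (r : X → X → Prop) (c : ℕ → X) : Prop := ∀ n, r (c (n + 1)) (c n)

/-- A (future or past) chain. -/
def IsChronChain (r : X → X → Prop) (c : ℕ → X) : Prop :=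
  IsFutureChain r c ∨ IsPastChain r c

/-- `(X, r)` is a chronological set: `r` is transitive and irreflexive, there are no
isolates, and there is a countable dense subset. -/
def IsChronSet (r : X → X → Prop) : Prop :=
  Transitive r ∧ Irreflexive r ∧ (∀ x : X, ∃ y : X, r x y ∨ r y x) ∧
    ∃ D : Set X, D.Countable ∧ ∀ x y : X, r x y → ∃ d ∈ D, r x d ∧ r d y

/-- Weakly distinguishing: points with the same past and future coincide. -/
def WeaklyDist (r : X → X → Prop) : Prop :=
  ∀ x y : X, pastPt r x = pastPt r y → futPt r x = futPt r y → x = y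

/-- The natural injection `i(x) = (I⁻(x), I⁺(x))` into `X_p × X_f`. -/
def inj (r : X → X → Prop) (x : X) : Set X × Set X := (pastPt r x, futPt r x)

/-- `(P, F) ∈ X_p × X_f` is an endpoint of a future chain `c` if `P = I⁻[c]` and
`dec(F) ⊆ Ľ(c)`; of a past chain if `F = I⁺[c]` and `dec(P) ⊆ L̂(c)`. -/
def IsEndpoint (r : X → X → Prop) (c : ℕ → X) (p : Set X × Set X) : Prop :=
  IsPastSet r p.1 ∧ IsFutureSet r p.2 ∧
    ((IsFutureChain r c ∧ p.1 = pastOf r (Set.range c) ∧ decF r p.2 ⊆ Lcheck r c) ∨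
     (IsPastChain r c ∧ p.2 = futureOf r (Set.range c) ∧ decP r p.1 ⊆ Lhat r c))

/-- `X^end`: the union of `i[X]` with all endpoints of all chains in `X`. -/
def endSet (r : X → X → Prop) : Set (Set X × Set X) :=
  Set.range (inj r) ∪ {p | ∃ c : ℕ → X, IsChronChain r c ∧ IsEndpoint r c p}

/-- A completion of `X`: a set `X̄` with `i[X] ⊆ X̄ ⊆ X^end` such that every chain
in `X` has some endpoint in `X̄`. -/
def IsCompletion (r : X → X → Prop) (Xb : Set (Set X × Set X)) : Prop :=
  Set.range (inj r) ⊆ Xb ∧ Xb ⊆ endSet r ∧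
    ∀ c : ℕ → X, IsChronChain r c → ∃ p ∈ Xb, IsEndpoint r c p

/-- The chronology on pairs: `(P,F) ≪̄ (P',F')` iff `F ∩ P' ≠ ∅`. -/
def llbar (p q : Set X × Set X) : Prop := (p.2 ∩ q.1).Nonempty

/-- The chronology `≪̄` on a completion, viewed on the subtype. -/
def subRel (Xb : Set (Set X × Set X)) (a b : ↥Xb) : Prop := llbar a.1 b.1

/-- The injection of `X` into a completion `X̄` (as a subtype). -/
def iota (r : X → X → Prop) (Xb : Set (Set X × Set X))
    (h : Set.range (inj r) ⊆ Xb) (x : X) : ↥Xb := ⟨inj r x, h ⟨x, rfl⟩⟩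


/-- `j(P) = I⁻[i[P]]`, computed with `≪̄` in the completion `X̄`. -/
def jmapP (r : X → X → Prop) (Xb : Set (Set X × Set X))
    (h : Set.range (inj r) ⊆ Xb) (P : Set X) : Set ↥Xb :=
  pastOf (subRel Xb) (iota r Xb h '' P)

/-- `j(F) = I⁺[i[F]]`, computed with `≪̄` in the completion `X̄`. -/
def jmapF (r : X → X → Prop) (Xb : Set (Set X × Set X))
    (h : Set.range (inj r) ⊆ Xb) (F : Set X) : Set ↥Xb :=
  futureOf (subRel Xb) (iota r Xb h '' F)

/-- `k(𝒫) = i⁻¹[𝒫 ∩ i[X]]`. -/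
def kmap (r : X → X → Prop) (Xb : Set (Set X × Set X))
    (h : Set.range (inj r) ⊆ Xb) (S : Set ↥Xb) : Set X :=
  {x | iota r Xb h x ∈ S}

section AuxLemmas

variable {X : Type*} {s : X → X → Prop}

/-- Density property extracted from a chronological set. -/
def Dens (s : X → X → Prop) : Prop := ∀ ⦃x y⦄, s x y → ∃ d, s x d ∧ s d y

lemma dens_flip (hd : Dens s) : Dens (flip s) := fun x y hxy => by
  obtain ⟨d, h1, h2⟩ := hd hxy; exact ⟨d, h2, h1⟩

lemma trans_flip (ht : Transitive s) : Transitive (flip s) := fun _ _ _ h1 h2 => ht h2 h1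

lemma IsFutureSet.up {F : Set X} (hF : IsFutureSet s F) {x y : X}
    (hx : x ∈ F) (hxy : s x y) : y ∈ F := by
  rw [hF]; exact ⟨x, hx, hxy⟩

lemma IsFutureSet.down {F : Set X} (hF : IsFutureSet s F) {x : X} (hx : x ∈ F) :
    ∃ a ∈ F, s a x := by rw [hF] at hx; exact hx

lemma IsPastSet.down {P : Set X} (hP : IsPastSet s P) {x y : X}
    (hx : x ∈ P) (hyx : s y x) : y ∈ P := by rw [hP]; exact ⟨x, hx, hyx⟩

lemma IsPastSet.up {P : Set X} (hP : IsPastSet s P) {x : X} (hx : x ∈ P) :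
    ∃ a ∈ P, s x a := by rw [hP] at hx; exact hx

lemma IsPastSet.toFlip {P : Set X} (hP : IsPastSet s P) : IsFutureSet (flip s) P := hP
lemma IsFutureSet.toFlip {F : Set X} (hF : IsFutureSet s F) : IsPastSet (flip s) F := hF
lemma isIP_flip {P : Set X} (hP : IsIP s P) : IsIF (flip s) P := hP
lemma isIF_flip {F : Set X} (hF : IsIF s F) : IsIP (flip s) F := hF

example (P : Set X) : decP s P = decF (flip s) P := rfl
example (σ : ℕ → X) : Lhat s σ = Lcheck (flip s) σ := rfl
example (c : ℕ → X) (h : IsFutureChain s c) : IsPastChain (flip s) c := h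

end AuxLemmas
section AuxLemmas2

variable {X : Type*} {s : X → X → Prop}

lemma futureOf_mono {S T : Set X} (h : S ⊆ T) : futureOf s S ⊆ futureOf s T := by
  rintro x ⟨a, ha, hax⟩; exact ⟨a, h ha, hax⟩

lemma futureOf_union (S T : Set X) :
    futureOf s (S ∪ T) = futureOf s S ∪ futureOf s T := by
  ext x
  constructor
  · rintro ⟨a, ha | ha, hax⟩
    · exact Or.inl ⟨a, ha, hax⟩
    · exact Or.inr ⟨a, ha, hax⟩
  · rintro (⟨a, ha, hax⟩ | ⟨a, ha, hax⟩)
    · exact ⟨a, Or.inl ha, hax⟩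
    · exact ⟨a, Or.inr ha, hax⟩

lemma isFutureSet_futureOf (ht : Transitive s) (hd : Dens s) (S : Set X) :
    IsFutureSet s (futureOf s S) := by
  apply Set.eq_of_subset_of_subset
  · rintro x ⟨a, ha, hax⟩
    obtain ⟨d, had, hdx⟩ := hd hax
    exact ⟨d, ⟨a, ha, had⟩, hdx⟩
  · rintro x ⟨a, ⟨b, hb, hba⟩, hax⟩
    exact ⟨b, hb, ht hba hax⟩

lemma isPastSet_pastOf (ht : Transitive s) (hd : Dens s) (S : Set X) :
    IsPastSet s (pastOf s S) :=
  isFutureSet_futureOf (trans_flip ht) (dens_flip hd) S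

lemma isFutureSet_futPt (ht : Transitive s) (hd : Dens s) (x : X) :
    IsFutureSet s (futPt s x) := by
  apply Set.eq_of_subset_of_subset
  · intro y hy
    obtain ⟨d, hxd, hdy⟩ := hd hy
    exact ⟨d, hxd, hdy⟩
  · rintro y ⟨a, hxa, hay⟩
    exact ht hxa hay

lemma isPastSet_pastPt (ht : Transitive s) (hd : Dens s) (x : X) :
    IsPastSet s (pastPt s x) :=
  isFutureSet_futPt (trans_flip ht) (dens_flip hd) x

lemma futureChain_lt {c : ℕ → X} (ht : Transitive s) (hc : IsFutureChain s c)
    {m n : ℕ} (h : m < n) : s (c m) (c n) := by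
  induction n with
  | zero => omega
  | succ k ih =>
    rcases Nat.lt_succ_iff_lt_or_eq.mp h with h' | h'
    · exact ht (ih h') (hc k)
    · subst h'; exact hc m

lemma pastChain_lt {c : ℕ → X} (ht : Transitive s) (hc : IsPastChain s c)
    {m n : ℕ} (h : m < n) : s (c n) (c m) :=
  futureChain_lt (trans_flip ht) hc h

lemma isIF_futureOf_range {c : ℕ → X} (ht : Transitive s) (hc : IsPastChain s c) :
    IsIF s (futureOf s (Set.range c)) := by
  have hmem : ∀ n, c n ∈ futureOf s (Set.range c) :=
    fun n => ⟨c (n + 1), ⟨n + 1, rfl⟩, hc n⟩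
  refine ⟨?_, ⟨c 0, hmem 0⟩, ?_⟩
  · apply Set.eq_of_subset_of_subset
    · rintro x ⟨a, ⟨n, rfl⟩, hax⟩
      exact ⟨c n, hmem n, hax⟩
    · rintro x ⟨a, ⟨b, ⟨n, rfl⟩, hba⟩, hax⟩
      exact ⟨c n, ⟨n, rfl⟩, ht hba hax⟩
  · rintro ⟨F₁, F₂, h₁, h₂, hs₁, hs₂, hU⟩
    have key : ∀ (F : Set X), IsFutureSet s F →
        (∀ n, ∃ k, n ≤ k ∧ c k ∈ F) → futureOf s (Set.range c) ⊆ F := by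
      intro F hF hcof
      rintro x ⟨a, ⟨n, rfl⟩, hax⟩
      obtain ⟨k, hnk, hkF⟩ := hcof n
      rcases Nat.lt_or_ge n k with h' | h'
      · exact hF.up hkF (ht (pastChain_lt ht hc h') hax)
      · have : k = n := le_antisymm h' hnk
        subst this; exact hF.up hkF hax
    by_cases hinf : ∀ n, ∃ k, n ≤ k ∧ c k ∈ F₁
    · exact hs₁.2 (key F₁ h₁ hinf)
    · push_neg at hinf
      obtain ⟨n₀, hn₀⟩ := hinf
      apply hs₂.2
      apply key F₂ h₂
      intro n
      refine ⟨max n₀ n, le_max_right _ _, ?_⟩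
      have hmem' : c (max n₀ n) ∈ F₁ ∪ F₂ := hU ▸ hmem _
      rcases hmem' with h' | h'
      · exact absurd h' (hn₀ _ (le_max_left _ _))
      · exact h'

lemma isIP_pastOf_range {c : ℕ → X} (ht : Transitive s) (hc : IsFutureChain s c) :
    IsIP s (pastOf s (Set.range c)) :=
  isIF_futureOf_range (trans_flip ht) hc

lemma isIF_subset_union (ht : Transitive s) (hd : Dens s) {Q F₁ F₂ : Set X}
    (hQ : IsIF s Q) (h₁ : IsFutureSet s F₁) (h₂ : IsFutureSet s F₂)
    (hsub : Q ⊆ F₁ ∪ F₂) : Q ⊆ F₁ ∨ Q ⊆ F₂ := by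
  set G₁ := futureOf s (Q ∩ F₁) with hG₁
  set G₂ := futureOf s (Q ∩ F₂) with hG₂
  have hGQ : ∀ G ∈ [G₁, G₂], G ⊆ Q := by
    intro G hG
    have : ∀ (F : Set X), futureOf s (Q ∩ F) ⊆ Q := by
      rintro F x ⟨a, ⟨haQ, _⟩, hax⟩; exact hQ.1.up haQ hax
    simp only [List.mem_cons, List.mem_singleton] at hG
    rcases hG with rfl | rfl | h
    · exact this F₁
    · exact this F₂
    · simp at h
  have hG₁F : G₁ ⊆ F₁ := by rintro x ⟨a, ⟨_, haF⟩, hax⟩; exact h₁.up haF hax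
  have hG₂F : G₂ ⊆ F₂ := by rintro x ⟨a, ⟨_, haF⟩, hax⟩; exact h₂.up haF hax
  have hUn : Q = G₁ ∪ G₂ := by
    rw [hG₁, hG₂, ← futureOf_union]
    have : Q ∩ F₁ ∪ Q ∩ F₂ = Q := by
      rw [← Set.inter_union_distrib_left]
      exact Set.inter_eq_left.mpr hsub
    rw [this]; exact hQ.1
  by_cases hq1 : G₁ = Q
  · left; rw [← hq1]; exact hG₁F
  by_cases hq2 : G₂ = Q
  · right; rw [← hq2]; exact hG₂F
  exact absurd ⟨G₁, G₂, isFutureSet_futureOf ht hd _, isFutureSet_futureOf ht hd _,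
    ⟨hGQ G₁ (by simp), fun hcon => hq1 (le_antisymm (hGQ G₁ (by simp)) hcon)⟩,
    ⟨hGQ G₂ (by simp), fun hcon => hq2 (le_antisymm (hGQ G₂ (by simp)) hcon)⟩,
    hUn⟩ hQ.2.2

lemma isIP_subset_union (ht : Transitive s) (hd : Dens s) {Q P₁ P₂ : Set X}
    (hQ : IsIP s Q) (h₁ : IsPastSet s P₁) (h₂ : IsPastSet s P₂)
    (hsub : Q ⊆ P₁ ∪ P₂) : Q ⊆ P₁ ∨ Q ⊆ P₂ :=
  isIF_subset_union (trans_flip ht) (dens_flip hd) hQ h₁ h₂ hsub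

end AuxLemmas2
section AuxLemmas3

variable {X : Type*} {s : X → X → Prop}

lemma isFutureSet_sUnion {C : Set (Set X)} (h : ∀ F ∈ C, IsFutureSet s F) :
    IsFutureSet s (⋃₀ C) := by
  apply Set.eq_of_subset_of_subset
  · intro x hx
    obtain ⟨F, hF, hxF⟩ := hx
    obtain ⟨a, haF, hax⟩ := (h F hF).down hxF
    exact ⟨a, ⟨F, hF, haF⟩, hax⟩
  · rintro x ⟨a, ⟨F, hF, haF⟩, hax⟩
    exact ⟨F, hF, (h F hF).up haF hax⟩

lemma exists_mem_decF (ht : Transitive s) (hd : Dens s) {F : Set X}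
    (hF : IsFutureSet s F) {x : X} (hx : x ∈ F) : ∃ Q ∈ decF s F, x ∈ Q := by
  -- build a past chain in F below x
  have hstep : ∀ y : F, ∃ z : F, s z.1 y.1 := by
    rintro ⟨y, hy⟩
    obtain ⟨a, ha, hay⟩ := hF.down hy
    exact ⟨⟨a, ha⟩, hay⟩
  choose g hg using hstep
  obtain ⟨a0, ha0, h0⟩ := hF.down hx
  set c : ℕ → F := fun n => g^[n] ⟨a0, ha0⟩ with hcdef
  have hpc : IsPastChain s (fun n => (c n).1) := by
    intro n
    show s (c (n + 1)).1 (c n).1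
    rw [show c (n + 1) = g (c n) from Function.iterate_succ_apply' g n ⟨a0, ha0⟩]
    exact hg (c n)
  set Q₀ := futureOf s (Set.range fun n => (c n).1) with hQ₀
  have hQ₀IF : IsIF s Q₀ := isIF_futureOf_range ht hpc
  have hxQ₀ : x ∈ Q₀ := ⟨(c 0).1, ⟨0, rfl⟩, by
    have : c 0 = ⟨a0, ha0⟩ := rfl
    rw [this]; exact h0⟩
  have hQ₀F : Q₀ ⊆ F := by
    rintro y ⟨a, ⟨n, rfl⟩, hay⟩
    exact hF.up (c n).2 hay
  -- Zorn
  set S : Set (Set X) := {Q | IsIF s Q ∧ Q ⊆ F} with hS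
  have hzorn : ∀ C ⊆ S, IsChain (· ⊆ ·) C → C.Nonempty → ∃ ub ∈ S, ∀ t ∈ C, t ⊆ ub := by
    intro C hCS hchain ⟨Q₁, hQ₁⟩
    refine ⟨⋃₀ C, ⟨⟨isFutureSet_sUnion fun F' hF' => (hCS hF').1.1, ?_, ?_⟩, ?_⟩,
      fun t ht' => Set.subset_sUnion_of_mem ht'⟩
    · obtain ⟨y, hy⟩ := (hCS hQ₁).1.2.1
      exact ⟨y, Q₁, hQ₁, hy⟩
    · rintro ⟨F₁, F₂, h₁, h₂, hs₁, hs₂, hU⟩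
      have hdich : ∀ Q ∈ C, Q ⊆ F₁ ∨ Q ⊆ F₂ := by
        intro Q hQ
        exact isIF_subset_union ht hd (hCS hQ).1 h₁ h₂
          ((Set.subset_sUnion_of_mem hQ).trans hU.le)
      by_cases hall1 : ∀ Q ∈ C, Q ⊆ F₁
      · exact hs₁.2 (fun y hy => by obtain ⟨Q, hQ, hyQ⟩ := hy; exact hall1 Q hQ hyQ)
      push_neg at hall1
      obtain ⟨Qa, hQa, hQa1⟩ := hall1
      have hQa2 : Qa ⊆ F₂ := (hdich Qa hQa).resolve_left hQa1
      by_cases hall2 : ∀ Q ∈ C, Q ⊆ F₂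
      · exact hs₂.2 (fun y hy => by obtain ⟨Q, hQ, hyQ⟩ := hy; exact hall2 Q hQ hyQ)
      push_neg at hall2
      obtain ⟨Qb, hQb, hQb2⟩ := hall2
      have hQb1 : Qb ⊆ F₁ := (hdich Qb hQb).resolve_right hQb2
      rcases eq_or_ne Qa Qb with rfl | hne
      · exact hQa1 hQb1
      rcases hchain hQa hQb hne with hab | hba
      · exact hQa1 (hab.trans hQb1)
      · exact hQb2 (hba.trans hQa2)
    · rintro y ⟨Q, hQ, hyQ⟩
      exact (hCS hQ).2 hyQ
  obtain ⟨m, hQ₀m, hmax⟩ := zorn_subset_nonempty S hzorn Q₀ ⟨hQ₀IF, hQ₀F⟩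
  refine ⟨m, ⟨hmax.prop.1, hmax.prop.2, ?_⟩, hQ₀m hxQ₀⟩
  intro Q' hQ' hQ'F hmQ'
  exact le_antisymm hmQ' (hmax.2 ⟨hQ', hQ'F⟩ hmQ')

lemma exists_mem_decP (ht : Transitive s) (hd : Dens s) {P : Set X}
    (hP : IsPastSet s P) {x : X} (hx : x ∈ P) : ∃ Q ∈ decP s P, x ∈ Q :=
  exists_mem_decF (trans_flip ht) (dens_flip hd) hP hx

end AuxLemmas3
section AuxXb

variable {X : Type*} {r : X → X → Prop} {Xb : Set (Set X × Set X)}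

lemma mem_Xb_struct (ht : Transitive r) (hd : Dens r) (hXb : Xb ⊆ endSet r)
    {b : Set X × Set X} (hb : b ∈ Xb) : IsPastSet r b.1 ∧ IsFutureSet r b.2 := by
  rcases hXb hb with ⟨x, rfl⟩ | ⟨c, _, hep⟩
  · exact ⟨isPastSet_pastPt ht hd x, isFutureSet_futPt ht hd x⟩
  · exact ⟨hep.1, hep.2.1⟩

lemma Xb_rel (ht : Transitive r) (hd : Dens r) (hXb : Xb ⊆ endSet r)
    {b : Set X × Set X} (hb : b ∈ Xb) {x y : X} (hx : x ∈ b.1) (hy : y ∈ b.2) :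
    r x y := by
  rcases hXb hb with ⟨z, rfl⟩ | ⟨c, _, hP, hF, hcase⟩
  · exact ht hx hy
  · rcases hcase with ⟨hfc, hb1, hdF⟩ | ⟨hpc, hb2, hdP⟩
    · rw [hb1] at hx
      obtain ⟨_, ⟨n, rfl⟩, hxn⟩ := hx
      obtain ⟨Q, hQ, hyQ⟩ := exists_mem_decF ht hd hF hy
      have hLI := (hdF hQ).2.1 hyQ
      obtain ⟨N, hN⟩ : ∃ N, ∀ k, N ≤ k → r (c k) y := by
        simp only [seqLI, Set.mem_iUnion, Set.mem_iInter] at hLI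
        exact hLI
      have h1 : r x (c (max (n + 1) N)) :=
        ht hxn (futureChain_lt ht hfc (lt_of_lt_of_le (Nat.lt_succ_self n) (le_max_left _ _)))
      exact ht h1 (hN _ (le_max_right _ _))
    · rw [hb2] at hy
      obtain ⟨_, ⟨n, rfl⟩, hny⟩ := hy
      obtain ⟨Q, hQ, hxQ⟩ := exists_mem_decP ht hd hP hx
      have hLI := (hdP hQ).2.1 hxQ
      obtain ⟨N, hN⟩ : ∃ N, ∀ k, N ≤ k → r x (c k) := by
        simp only [seqLI, Set.mem_iUnion, Set.mem_iInter] at hLI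
        exact hLI
      have h1 : r (c (max (n + 1) N)) y :=
        ht (pastChain_lt ht hpc (lt_of_lt_of_le (Nat.lt_succ_self n) (le_max_left _ _))) hny
      exact ht (hN _ (le_max_right _ _)) h1

lemma subRel_trans (ht : Transitive r) (hd : Dens r) (hXb : Xb ⊆ endSet r) :
    Transitive (subRel Xb) := by
  rintro a b g ⟨x, hxa, hxb⟩ ⟨y, hyb, hyg⟩
  have hxy : r x y := Xb_rel ht hd hXb b.2 hxb hyb
  exact ⟨y, (mem_Xb_struct ht hd hXb a.2).2.up hxa hxy, hyg⟩

lemma iota_rel {hsub : Set.range (inj r) ⊆ Xb} (ht : Transitive r) (hd : Dens r) {x y : X} :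
    subRel Xb (iota r Xb hsub x) (iota r Xb hsub y) ↔ r x y := by
  constructor
  · rintro ⟨d, hxd, hdy⟩
    exact ht hxd hdy
  · intro hxy
    obtain ⟨d, h1, h2⟩ := hd hxy
    exact ⟨d, h1, h2⟩

end AuxXb
section AuxChar

variable {X : Type*} {r : X → X → Prop} {Xb : Set (Set X × Set X)}

/-- `{a ∈ X̄ | (↑a).1 ∩ F ≠ ∅}`: the candidate for `I⁺[i[F]]`. -/
def Fchar (Xb : Set (Set X × Set X)) (F : Set X) : Set ↥Xb :=
  {a | (((a : Set X × Set X)).1 ∩ F).Nonempty}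

/-- `{a ∈ X̄ | (↑a).2 ∩ P ≠ ∅}`: the candidate for `I⁻[i[P]]`. -/
def Pchar (Xb : Set (Set X × Set X)) (P : Set X) : Set ↥Xb :=
  {a | (((a : Set X × Set X)).2 ∩ P).Nonempty}

lemma Fchar_mono {A B : Set X} (h : A ⊆ B) : Fchar Xb A ⊆ Fchar Xb B := by
  rintro a ⟨x, hx1, hxA⟩; exact ⟨x, hx1, h hxA⟩

lemma Fchar_union (A B : Set X) : Fchar Xb (A ∪ B) = Fchar Xb A ∪ Fchar Xb B := by
  ext a
  constructor
  · rintro ⟨x, hx1, hxF | hxF⟩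
    · exact Or.inl ⟨x, hx1, hxF⟩
    · exact Or.inr ⟨x, hx1, hxF⟩
  · rintro (⟨x, hx1, hxF⟩ | ⟨x, hx1, hxF⟩)
    · exact ⟨x, hx1, Or.inl hxF⟩
    · exact ⟨x, hx1, Or.inr hxF⟩

lemma jmapF_eq_Fchar {hsub : Set.range (inj r) ⊆ Xb} {F : Set X} (hF : IsFutureSet r F) :
    jmapF r Xb hsub F = Fchar Xb F := by
  ext a
  constructor
  · rintro ⟨b, ⟨f, hfF, rfl⟩, w, hw2, hw1⟩
    exact ⟨w, hw1, hF.up hfF hw2⟩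
  · rintro ⟨w, hw1, hwF⟩
    obtain ⟨f, hfF, hfw⟩ := hF.down hwF
    exact ⟨iota r Xb hsub f, ⟨f, hfF, rfl⟩, w, hfw, hw1⟩

lemma isFutureSet_Fchar (ht : Transitive r) (hd : Dens r) (hXb : Xb ⊆ endSet r)
    (hsub : Set.range (inj r) ⊆ Xb) {F : Set X} (hF : IsFutureSet r F) :
    IsFutureSet (subRel Xb) (Fchar Xb F) := by
  apply Set.eq_of_subset_of_subset
  · rintro a ⟨w, hw1, hwF⟩
    obtain ⟨f, hfF, hfw⟩ := hF.down hwF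
    refine ⟨iota r Xb hsub f, ?_, w, hfw, hw1⟩
    obtain ⟨f0, hf0F, hf0f⟩ := hF.down hfF
    exact ⟨f0, hf0f, hf0F⟩
  · rintro a ⟨b, ⟨w, hw1, hwF⟩, x, hx2, hx1⟩
    exact ⟨x, hx1, hF.up hwF (Xb_rel ht hd hXb b.2 hw1 hx2)⟩

lemma kmap_Fchar {hsub : Set.range (inj r) ⊆ Xb} {F : Set X} (hF : IsFutureSet r F) :
    kmap r Xb hsub (Fchar Xb F) = F := by
  ext x
  constructor
  · rintro ⟨w, hwx, hwF⟩
    exact hF.up hwF hwx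
  · intro hx
    obtain ⟨f, hfF, hfx⟩ := hF.down hx
    exact ⟨f, hfx, hfF⟩

lemma kmap_futureSet (ht : Transitive r) (hd : Dens r) (hXb : Xb ⊆ endSet r)
    {hsub : Set.range (inj r) ⊆ Xb} {G : Set ↥Xb} (hG : IsFutureSet (subRel Xb) G) :
    IsFutureSet r (kmap r Xb hsub G) := by
  apply Set.eq_of_subset_of_subset
  · intro x hx
    obtain ⟨a, haG, y, hy2, hyx⟩ := hG.down hx
    refine ⟨y, ?_, hyx⟩
    show iota r Xb hsub y ∈ G
    rw [hG]
    obtain ⟨u, hu2, huy⟩ := (mem_Xb_struct ht hd hXb a.2).2.down hy2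
    exact ⟨a, haG, u, hu2, huy⟩
  · rintro x ⟨y, hy, hyx⟩
    show iota r Xb hsub x ∈ G
    rw [hG]
    exact ⟨iota r Xb hsub y, hy, (iota_rel ht hd).mpr hyx⟩

lemma futureSet_eq_Fchar (ht : Transitive r) (hd : Dens r) (hXb : Xb ⊆ endSet r)
    {hsub : Set.range (inj r) ⊆ Xb} {G : Set ↥Xb} (hG : IsFutureSet (subRel Xb) G) :
    G = Fchar Xb (kmap r Xb hsub G) := by
  apply Set.eq_of_subset_of_subset
  · intro a ha
    obtain ⟨a', ha', x, hx2, hx1⟩ := hG.down ha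
    refine ⟨x, hx1, ?_⟩
    show iota r Xb hsub x ∈ G
    rw [hG]
    obtain ⟨u, hu2, hux⟩ := (mem_Xb_struct ht hd hXb a'.2).2.down hx2
    exact ⟨a', ha', u, hu2, hux⟩
  · rintro a ⟨x, hx1, hxk⟩
    rw [hG]
    refine ⟨iota r Xb hsub x, hxk, ?_⟩
    obtain ⟨w, hw1, hxw⟩ := (mem_Xb_struct ht hd hXb a.2).1.up hx1
    exact ⟨w, hxw, hw1⟩

lemma isIF_kmap (ht : Transitive r) (hd : Dens r) (hXb : Xb ⊆ endSet r)
    {hsub : Set.range (inj r) ⊆ Xb} {Q : Set ↥Xb} (hQ : IsIF (subRel Xb) Q) :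
    IsIF r (kmap r Xb hsub Q) := by
  have hQeq := futureSet_eq_Fchar ht hd hXb (hsub := hsub) hQ.1
  refine ⟨kmap_futureSet ht hd hXb hQ.1, ?_, ?_⟩
  · obtain ⟨a, ha⟩ := hQ.2.1
    rw [hQeq] at ha
    obtain ⟨x, _, hxk⟩ := ha
    exact ⟨x, hxk⟩
  · rintro ⟨F₁, F₂, h₁, h₂, hs₁, hs₂, hU⟩
    apply hQ.2.2
    have hFQ : ∀ {A : Set X}, A ⊆ kmap r Xb hsub Q → Fchar Xb A ⊆ Q := by
      intro A hA
      rw [hQeq]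
      exact Fchar_mono hA
    have hne : ∀ (A : Set X), IsFutureSet r A → A ⊂ kmap r Xb hsub Q → Fchar Xb A ≠ Q := by
      intro A hAfs hA hcon
      obtain ⟨x, hxk, hxA⟩ := Set.exists_of_ssubset hA
      have hx : iota r Xb hsub x ∈ Fchar Xb A := by rw [hcon]; exact hxk
      obtain ⟨w, hw1, hwA⟩ := hx
      exact hxA (hAfs.up hwA hw1)
    refine ⟨Fchar Xb F₁, Fchar Xb F₂, isFutureSet_Fchar ht hd hXb hsub h₁,
      isFutureSet_Fchar ht hd hXb hsub h₂,
      lt_of_le_of_ne (hFQ hs₁.subset) (hne F₁ h₁ hs₁),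
      lt_of_le_of_ne (hFQ hs₂.subset) (hne F₂ h₂ hs₂), ?_⟩
    rw [hQeq, hU, Fchar_union]

lemma isIF_Fchar (ht : Transitive r) (hd : Dens r) (hXb : Xb ⊆ endSet r)
    (hsub : Set.range (inj r) ⊆ Xb) {Q : Set X} (hQ : IsIF r Q) :
    IsIF (subRel Xb) (Fchar Xb Q) := by
  refine ⟨isFutureSet_Fchar ht hd hXb hsub hQ.1, ?_, ?_⟩
  · obtain ⟨q, hq⟩ := hQ.2.1
    obtain ⟨q0, hq0Q, hq0q⟩ := hQ.1.down hq
    exact ⟨iota r Xb hsub q, q0, hq0q, hq0Q⟩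
  · rintro ⟨G₁, G₂, h₁, h₂, hs₁, hs₂, hU⟩
    have hk : kmap r Xb hsub (Fchar Xb Q) = Q := kmap_Fchar hQ.1
    have hQsub : Q ⊆ kmap r Xb hsub G₁ ∪ kmap r Xb hsub G₂ := by
      intro x hx
      have hx' : iota r Xb hsub x ∈ Fchar Xb Q := by rw [← hk] at hx; exact hx
      rw [hU] at hx'
      exact hx'
    rcases isIF_subset_union ht hd hQ (kmap_futureSet ht hd hXb h₁)
        (kmap_futureSet ht hd hXb h₂) hQsub with hQ1 | hQ1
    · have hcc : Fchar Xb Q ⊆ G₁ := by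
        rw [futureSet_eq_Fchar ht hd hXb (hsub := hsub) h₁]
        exact Fchar_mono hQ1
      exact hs₁.ne (le_antisymm hs₁.subset hcc)
    · have hcc : Fchar Xb Q ⊆ G₂ := by
        rw [futureSet_eq_Fchar ht hd hXb (hsub := hsub) h₂]
        exact Fchar_mono hQ1
      exact hs₂.ne (le_antisymm hs₂.subset hcc)

end AuxChar
section AuxCharP

variable {X : Type*} {r : X → X → Prop} {Xb : Set (Set X × Set X)}

lemma Pchar_mono {A B : Set X} (h : A ⊆ B) : Pchar Xb A ⊆ Pchar Xb B := by
  rintro a ⟨x, hx2, hxA⟩; exact ⟨x, hx2, h hxA⟩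

lemma Pchar_union (A B : Set X) : Pchar Xb (A ∪ B) = Pchar Xb A ∪ Pchar Xb B := by
  ext a
  constructor
  · rintro ⟨x, hx2, hxP | hxP⟩
    · exact Or.inl ⟨x, hx2, hxP⟩
    · exact Or.inr ⟨x, hx2, hxP⟩
  · rintro (⟨x, hx2, hxP⟩ | ⟨x, hx2, hxP⟩)
    · exact ⟨x, hx2, Or.inl hxP⟩
    · exact ⟨x, hx2, Or.inr hxP⟩

lemma jmapP_eq_Pchar {hsub : Set.range (inj r) ⊆ Xb} {P : Set X} (hP : IsPastSet r P) :
    jmapP r Xb hsub P = Pchar Xb P := by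
  ext a
  constructor
  · rintro ⟨b, ⟨p, hpP, rfl⟩, w, hw2, hw1⟩
    exact ⟨w, hw2, hP.down hpP hw1⟩
  · rintro ⟨w, hw2, hwP⟩
    obtain ⟨p, hpP, hwp⟩ := hP.up hwP
    exact ⟨iota r Xb hsub p, ⟨p, hpP, rfl⟩, w, hw2, hwp⟩

lemma isPastSet_Pchar (ht : Transitive r) (hd : Dens r) (hXb : Xb ⊆ endSet r)
    (hsub : Set.range (inj r) ⊆ Xb) {P : Set X} (hP : IsPastSet r P) :
    IsPastSet (subRel Xb) (Pchar Xb P) := by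
  apply Set.eq_of_subset_of_subset
  · rintro a ⟨w, hw2, hwP⟩
    obtain ⟨p, hpP, hwp⟩ := hP.up hwP
    refine ⟨iota r Xb hsub p, ?_, w, hw2, hwp⟩
    obtain ⟨p1, hp1P, hpp1⟩ := hP.up hpP
    exact ⟨p1, hpp1, hp1P⟩
  · rintro a ⟨b, ⟨w, hw2, hwP⟩, x, hx2, hx1⟩
    exact ⟨x, hx2, hP.down hwP (Xb_rel ht hd hXb b.2 hx1 hw2)⟩

lemma kmap_Pchar {hsub : Set.range (inj r) ⊆ Xb} {P : Set X} (hP : IsPastSet r P) :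
    kmap r Xb hsub (Pchar Xb P) = P := by
  ext x
  constructor
  · rintro ⟨w, hxw, hwP⟩
    exact hP.down hwP hxw
  · intro hx
    obtain ⟨p, hpP, hxp⟩ := hP.up hx
    exact ⟨p, hxp, hpP⟩

lemma kmap_pastSet (ht : Transitive r) (hd : Dens r) (hXb : Xb ⊆ endSet r)
    {hsub : Set.range (inj r) ⊆ Xb} {G : Set ↥Xb} (hG : IsPastSet (subRel Xb) G) :
    IsPastSet r (kmap r Xb hsub G) := by
  apply Set.eq_of_subset_of_subset
  · intro x hx
    obtain ⟨a, haG, y, hy2, hy1⟩ := hG.up hx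
    refine ⟨y, ?_, hy2⟩
    show iota r Xb hsub y ∈ G
    rw [hG]
    obtain ⟨u, hu1, hyu⟩ := (mem_Xb_struct ht hd hXb a.2).1.up hy1
    exact ⟨a, haG, u, hyu, hu1⟩
  · rintro x ⟨y, hy, hxy⟩
    show iota r Xb hsub x ∈ G
    rw [hG]
    exact ⟨iota r Xb hsub y, hy, (iota_rel ht hd).mpr hxy⟩

lemma pastSet_eq_Pchar (ht : Transitive r) (hd : Dens r) (hXb : Xb ⊆ endSet r)
    {hsub : Set.range (inj r) ⊆ Xb} {G : Set ↥Xb} (hG : IsPastSet (subRel Xb) G) :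
    G = Pchar Xb (kmap r Xb hsub G) := by
  apply Set.eq_of_subset_of_subset
  · intro a ha
    obtain ⟨a', ha', x, hx2, hx1⟩ := hG.up ha
    refine ⟨x, hx2, ?_⟩
    show iota r Xb hsub x ∈ G
    rw [hG]
    obtain ⟨u, hu1, hxu⟩ := (mem_Xb_struct ht hd hXb a'.2).1.up hx1
    exact ⟨a', ha', u, hxu, hu1⟩
  · rintro a ⟨x, hx2, hxk⟩
    rw [hG]
    refine ⟨iota r Xb hsub x, hxk, ?_⟩
    obtain ⟨w, hw2, hwx⟩ := (mem_Xb_struct ht hd hXb a.2).2.down hx2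
    exact ⟨w, hw2, hwx⟩

lemma isIP_kmap (ht : Transitive r) (hd : Dens r) (hXb : Xb ⊆ endSet r)
    {hsub : Set.range (inj r) ⊆ Xb} {Q : Set ↥Xb} (hQ : IsIP (subRel Xb) Q) :
    IsIP r (kmap r Xb hsub Q) := by
  have hQeq := pastSet_eq_Pchar ht hd hXb (hsub := hsub) hQ.1
  refine ⟨kmap_pastSet ht hd hXb hQ.1, ?_, ?_⟩
  · obtain ⟨a, ha⟩ := hQ.2.1
    rw [hQeq] at ha
    obtain ⟨x, _, hxk⟩ := ha
    exact ⟨x, hxk⟩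
  · rintro ⟨P₁, P₂, h₁, h₂, hs₁, hs₂, hU⟩
    apply hQ.2.2
    have hPQ : ∀ {A : Set X}, A ⊆ kmap r Xb hsub Q → Pchar Xb A ⊆ Q := by
      intro A hA
      rw [hQeq]
      exact Pchar_mono hA
    have hne : ∀ (A : Set X), IsPastSet r A → A ⊂ kmap r Xb hsub Q → Pchar Xb A ≠ Q := by
      intro A hAps hA hcon
      obtain ⟨x, hxk, hxA⟩ := Set.exists_of_ssubset hA
      have hx : iota r Xb hsub x ∈ Pchar Xb A := by rw [hcon]; exact hxk
      obtain ⟨w, hw2, hwA⟩ := hx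
      exact hxA (hAps.down hwA hw2)
    refine ⟨Pchar Xb P₁, Pchar Xb P₂, isPastSet_Pchar ht hd hXb hsub h₁,
      isPastSet_Pchar ht hd hXb hsub h₂,
      lt_of_le_of_ne (hPQ hs₁.subset) (hne P₁ h₁ hs₁),
      lt_of_le_of_ne (hPQ hs₂.subset) (hne P₂ h₂ hs₂), ?_⟩
    rw [hQeq, hU, Pchar_union]

lemma isIP_Pchar (ht : Transitive r) (hd : Dens r) (hXb : Xb ⊆ endSet r)
    (hsub : Set.range (inj r) ⊆ Xb) {Q : Set X} (hQ : IsIP r Q) :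
    IsIP (subRel Xb) (Pchar Xb Q) := by
  refine ⟨isPastSet_Pchar ht hd hXb hsub hQ.1, ?_, ?_⟩
  · obtain ⟨q, hq⟩ := hQ.2.1
    obtain ⟨q0, hq0Q, hqq0⟩ := hQ.1.up hq
    exact ⟨iota r Xb hsub q, q0, hqq0, hq0Q⟩
  · rintro ⟨G₁, G₂, h₁, h₂, hs₁, hs₂, hU⟩
    have hk : kmap r Xb hsub (Pchar Xb Q) = Q := kmap_Pchar hQ.1
    have hQsub : Q ⊆ kmap r Xb hsub G₁ ∪ kmap r Xb hsub G₂ := by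
      intro x hx
      have hx' : iota r Xb hsub x ∈ Pchar Xb Q := by rw [← hk] at hx; exact hx
      rw [hU] at hx'
      exact hx'
    rcases isIP_subset_union ht hd hQ (kmap_pastSet ht hd hXb h₁)
        (kmap_pastSet ht hd hXb h₂) hQsub with hQ1 | hQ1
    · have hcc : Pchar Xb Q ⊆ G₁ := by
        rw [pastSet_eq_Pchar ht hd hXb (hsub := hsub) h₁]
        exact Pchar_mono hQ1
      exact hs₁.ne (le_antisymm hs₁.subset hcc)
    · have hcc : Pchar Xb Q ⊆ G₂ := by
        rw [pastSet_eq_Pchar ht hd hXb (hsub := hsub) h₂]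
        exact Pchar_mono hQ1
      exact hs₂.ne (le_antisymm hs₂.subset hcc)

end AuxCharP
end CausalBoundary

open CausalBoundary

/-- Lemma 5.2 (i): if `(P,F)` is an endpoint of a chain `δ` in `X`,
then `(j(P), j(F))` is an endpoint of the chain `i[δ]` in the chronological set
`(X̄, ≪̄)`. -/
theorem stmt9 {X : Type*} (r : X → X → Prop) (h : IsChronSet r) (hw : WeaklyDist r)
    (Xb : Set (Set X × Set X)) (hc : IsCompletion r Xb)
    (δ : ℕ → X) (hch : IsChronChain r δ) (P F : Set X)
    (hend : IsEndpoint r δ (P, F)) :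
    IsEndpoint (subRel Xb) (fun i => iota r Xb hc.1 (δ i))
      (jmapP r Xb hc.1 P, jmapF r Xb hc.1 F) := by
  obtain ⟨ht, hirr, hnois, D, hDc, hDd⟩ := h
  have hd : Dens r := fun x y hxy => by
    obtain ⟨d, _, h1, h2⟩ := hDd x y hxy
    exact ⟨d, h1, h2⟩
  have hXb : Xb ⊆ endSet r := hc.2.1
  obtain ⟨hPps, hFfs, hcase⟩ := hend
  replace hPps : IsPastSet r P := hPps
  replace hFfs : IsFutureSet r F := hFfs
  refine ⟨?_, ?_, ?_⟩
  · show IsPastSet (subRel Xb) (jmapP r Xb hc.1 P)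
    rw [jmapP_eq_Pchar (hsub := hc.1) hPps]
    exact isPastSet_Pchar ht hd hXb hc.1 hPps
  · show IsFutureSet (subRel Xb) (jmapF r Xb hc.1 F)
    rw [jmapF_eq_Fchar (hsub := hc.1) hFfs]
    exact isFutureSet_Fchar ht hd hXb hc.1 hFfs
  rcases hcase with ⟨hfc, hPeq, hdF⟩ | ⟨hpc, hFeq, hdP⟩
  · -- future chain case
    replace hPeq : P = pastOf r (Set.range δ) := hPeq
    left
    refine ⟨fun n => (iota_rel ht hd).mpr (hfc n), ?_, ?_⟩
    · -- jmapP P = pastOf (subRel Xb) (range i∘δ)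
      show jmapP r Xb hc.1 P = pastOf (subRel Xb) (Set.range fun i => iota r Xb hc.1 (δ i))
      rw [jmapP_eq_Pchar (hsub := hc.1) hPps]
      ext a
      constructor
      · rintro ⟨w, hw2, hwP⟩
        rw [hPeq] at hwP
        obtain ⟨_, ⟨n, rfl⟩, hwn⟩ := hwP
        exact ⟨iota r Xb hc.1 (δ n), ⟨n, rfl⟩, w, hw2, hwn⟩
      · rintro ⟨b, ⟨n, rfl⟩, w, hw2, hw1⟩
        refine ⟨w, hw2, ?_⟩
        rw [hPeq]
        exact ⟨δ n, ⟨n, rfl⟩, hw1⟩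
    · -- decF (subRel) (jmapF F) ⊆ Lcheck (subRel) c'
      show decF (subRel Xb) (jmapF r Xb hc.1 F) ⊆
        Lcheck (subRel Xb) (fun i => iota r Xb hc.1 (δ i))
      rw [jmapF_eq_Fchar (hsub := hc.1) hFfs]
      rintro Q ⟨hQIF, hQsub, hQmax⟩
      have hkIF : IsIF r (kmap r Xb hc.1 Q) := isIF_kmap ht hd hXb hQIF
      have hQeq : Q = Fchar Xb (kmap r Xb hc.1 Q) :=
        futureSet_eq_Fchar ht hd hXb hQIF.1
      have hkF : kmap r Xb hc.1 Q ⊆ F := by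
        intro x hx
        obtain ⟨w, hw1, hwF⟩ := hQsub hx
        exact hFfs.up hwF hw1
      have hkmax : ∀ Q', IsIF r Q' → Q' ⊆ F → kmap r Xb hc.1 Q ⊆ Q' →
          kmap r Xb hc.1 Q = Q' := by
        intro Q' hQ' hQ'F hQQ'
        have h2 : Q ⊆ Fchar Xb Q' := by rw [hQeq]; exact Fchar_mono hQQ'
        have h3 := hQmax (Fchar Xb Q') (isIF_Fchar ht hd hXb hc.1 hQ')
          (Fchar_mono hQ'F) h2
        rw [h3]
        exact kmap_Fchar hQ'.1
      have hkdec : kmap r Xb hc.1 Q ∈ decF r F := ⟨hkIF, hkF, hkmax⟩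
      obtain ⟨_, hkLI, hkLS, hkLmax⟩ := hdF hkdec
      refine ⟨hQIF, ?_, ?_, ?_⟩
      · intro a ha
        rw [hQeq] at ha
        obtain ⟨x, hx1, hxk⟩ := ha
        have hx := hkLI hxk
        simp only [seqLI, Set.mem_iUnion, Set.mem_iInter] at hx ⊢
        obtain ⟨N, hN⟩ := hx
        exact ⟨N, fun k hk => ⟨x, hN k hk, hx1⟩⟩
      · intro a ha
        rw [hQeq] at ha
        obtain ⟨x, hx1, hxk⟩ := ha
        have hx := hkLS hxk
        simp only [seqLS, Set.mem_iInter, Set.mem_iUnion] at hx ⊢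
        intro N
        obtain ⟨k, hk, hxkk⟩ := hx N
        exact ⟨k, hk, x, hxkk, hx1⟩
      · intro Q' hQ' hQ'LS hQQ'
        have hk' : IsIF r (kmap r Xb hc.1 Q') := isIF_kmap ht hd hXb hQ'
        have hk'LS : kmap r Xb hc.1 Q' ⊆ seqLS (fun n => futPt r (δ n)) := by
          intro x hx
          have hx' := hQ'LS hx
          simp only [seqLS, Set.mem_iInter, Set.mem_iUnion] at hx' ⊢
          intro N
          obtain ⟨k, hk, w, hw1, hw2⟩ := hx' N
          exact ⟨k, hk, ht hw1 hw2⟩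
        have hmono : kmap r Xb hc.1 Q ⊆ kmap r Xb hc.1 Q' := fun x hx => hQQ' hx
        have hQQ'' := hkLmax (kmap r Xb hc.1 Q') hk' hk'LS hmono
        rw [hQeq, hQQ'']
        exact (futureSet_eq_Fchar ht hd hXb hQ'.1).symm
  · -- past chain case
    replace hFeq : F = futureOf r (Set.range δ) := hFeq
    right
    refine ⟨fun n => (iota_rel ht hd).mpr (hpc n), ?_, ?_⟩
    · show jmapF r Xb hc.1 F = futureOf (subRel Xb) (Set.range fun i => iota r Xb hc.1 (δ i))
      rw [jmapF_eq_Fchar (hsub := hc.1) hFfs]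
      ext a
      constructor
      · rintro ⟨w, hw1, hwF⟩
        rw [hFeq] at hwF
        obtain ⟨_, ⟨n, rfl⟩, hnw⟩ := hwF
        exact ⟨iota r Xb hc.1 (δ n), ⟨n, rfl⟩, w, hnw, hw1⟩
      · rintro ⟨b, ⟨n, rfl⟩, w, hw2, hw1⟩
        refine ⟨w, hw1, ?_⟩
        rw [hFeq]
        exact ⟨δ n, ⟨n, rfl⟩, hw2⟩
    · show decP (subRel Xb) (jmapP r Xb hc.1 P) ⊆
        Lhat (subRel Xb) (fun i => iota r Xb hc.1 (δ i))
      rw [jmapP_eq_Pchar (hsub := hc.1) hPps]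
      rintro Q ⟨hQIP, hQsub, hQmax⟩
      have hkIP : IsIP r (kmap r Xb hc.1 Q) := isIP_kmap ht hd hXb hQIP
      have hQeq : Q = Pchar Xb (kmap r Xb hc.1 Q) :=
        pastSet_eq_Pchar ht hd hXb hQIP.1
      have hkP : kmap r Xb hc.1 Q ⊆ P := by
        intro x hx
        obtain ⟨w, hw2, hwP⟩ := hQsub hx
        exact hPps.down hwP hw2
      have hkmax : ∀ Q', IsIP r Q' → Q' ⊆ P → kmap r Xb hc.1 Q ⊆ Q' →
          kmap r Xb hc.1 Q = Q' := by
        intro Q' hQ' hQ'P hQQ'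
        have h2 : Q ⊆ Pchar Xb Q' := by rw [hQeq]; exact Pchar_mono hQQ'
        have h3 := hQmax (Pchar Xb Q') (isIP_Pchar ht hd hXb hc.1 hQ')
          (Pchar_mono hQ'P) h2
        rw [h3]
        exact kmap_Pchar hQ'.1
      have hkdec : kmap r Xb hc.1 Q ∈ decP r P := ⟨hkIP, hkP, hkmax⟩
      obtain ⟨_, hkLI, hkLS, hkLmax⟩ := hdP hkdec
      refine ⟨hQIP, ?_, ?_, ?_⟩
      · intro a ha
        rw [hQeq] at ha
        obtain ⟨x, hx2, hxk⟩ := ha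
        have hx := hkLI hxk
        simp only [seqLI, Set.mem_iUnion, Set.mem_iInter] at hx ⊢
        obtain ⟨N, hN⟩ := hx
        exact ⟨N, fun k hk => ⟨x, hx2, hN k hk⟩⟩
      · intro a ha
        rw [hQeq] at ha
        obtain ⟨x, hx2, hxk⟩ := ha
        have hx := hkLS hxk
        simp only [seqLS, Set.mem_iInter, Set.mem_iUnion] at hx ⊢
        intro N
        obtain ⟨k, hk, hxkk⟩ := hx N
        exact ⟨k, hk, x, hx2, hxkk⟩
      · intro Q' hQ' hQ'LS hQQ'
        have hk' : IsIP r (kmap r Xb hc.1 Q') := isIP_kmap ht hd hXb hQ'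
        have hk'LS : kmap r Xb hc.1 Q' ⊆ seqLS (fun n => pastPt r (δ n)) := by
          intro x hx
          have hx' := hQ'LS hx
          simp only [seqLS, Set.mem_iInter, Set.mem_iUnion] at hx' ⊢
          intro N
          obtain ⟨k, hk, w, hw2, hw1⟩ := hx' N
          exact ⟨k, hk, ht hw2 hw1⟩
        have hmono : kmap r Xb hc.1 Q ⊆ kmap r Xb hc.1 Q' := fun x hx => hQQ' hx
        have hQQ'' := hkLmax (kmap r Xb hc.1 Q') hk' hk'LS hmono
        rw [hQeq, hQQ'']
        exact (pastSet_eq_Pchar ht hd hXb hQ'.1).symm
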